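/- Let μ be uniform on {−1,1}ⁿ and μ_N the empirical measure of N = ⌈n^α⌉ i.i.d. uniform samples, α ≥ 2. Then for all sufficiently large n, E[W(μ_N, μ)] ≥ n/2 − √(((α+1)/2)·n·log n). -/

import Mathlib

open MeasureTheory ProbabilityTheory

/-- The Boolean cube `{-1,1}^n`, encoded as `Fin n → Bool`. -/
abbrev Cube (n : ℕ) := Fin n → Bool

/-- Hamming distance, as a real number. -/
noncomputable def hdist {n : ℕ} (x y : Cube n) : ℝ := (hammingDist x y : ℝ)

/-- A probability mass function on the cube. -/
def IsProb {n : ℕ} (p : Cube n → ℝ) : Prop := (∀ x, 0 ≤ p x) ∧ ∑ x, p x = 1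

/-- A coupling of two mass functions on the cube. -/
def IsCoupling {n : ℕ} (γ : Cube n × Cube n → ℝ) (p q : Cube n → ℝ) : Prop :=
  (∀ z, 0 ≤ γ z) ∧ (∀ x, ∑ y, γ (x, y) = p x) ∧ (∀ y, ∑ x, γ (x, y) = q y)

/-- Wasserstein-1 distance on the cube w.r.t. the Hamming metric. -/
noncomputable def W {n : ℕ} (p q : Cube n → ℝ) : ℝ :=
  sInf {c | ∃ γ, IsCoupling γ p q ∧ c = ∑ z : Cube n × Cube n, γ z * hdist z.1 z.2}

/-- The uniform mass function on the cube. -/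
noncomputable def unif (n : ℕ) : Cube n → ℝ := fun _ => 1 / 2 ^ n

/-- The empirical mass function of the sample `X`. -/
noncomputable def empirical {n N : ℕ} (X : Fin N → Cube n) : Cube n → ℝ :=
  fun x => ((Finset.univ.filter fun i => X i = x).card : ℝ) / N

/-- `X 0, …, X (N-1)` are i.i.d. uniform random points of the cube. -/
def IIDUniform {Ω : Type*} [MeasurableSpace Ω] (P : Measure Ω) {n N : ℕ}
    (X : Fin N → Ω → Cube n) : Prop :=
  (∀ i, Measurable (X i)) ∧ iIndepFun X P ∧
    ∀ i x, P {ω | X i ω = x} = 1 / 2 ^ n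

/-- The Fourier character `χ_S(x) = ∏_{i ∈ S} x i`. -/
def chi {n : ℕ} (S : Finset (Fin n)) (x : Cube n) : ℝ := ∏ i ∈ S, if x i then 1 else -1

/-- Fourier coefficient `f̂(S)`. -/
noncomputable def fhat {n : ℕ} (f : Cube n → ℝ) (S : Finset (Fin n)) : ℝ :=
  (∑ x, f x * chi S x) / 2 ^ n

/-- ε-diffusion of a function/measure on the cube. -/
noncomputable def diffuse {n : ℕ} (ε : ℝ) (f : Cube n → ℝ) : Cube n → ℝ :=
  fun x => ∑ x', (1 - ε) ^ (n - hammingDist x x') * ε ^ (hammingDist x x') * f x'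

open Finset Real Filter

/-!
The empirical measure of `N = ⌈n ^ α⌉` points is carried by at most `N` points. By Chernoff's
bound a Hamming ball of radius `n / 2 - t` contains at most `2 ^ n * exp (-2 t ^ 2 / n)` points, so
for `t ≈ √((α + 1) / 2 * n * log n)` the balls around the sample cover a fraction of only about
`1 / n` of the cube, and in any coupling the uniform mass outside them travels at least
`n / 2 - t`. The bound holds for every sample, hence also in expectation.
-/

section HammingBall

variable {ι : Type*} [Fintype ι] [DecidableEq ι]

theorem sum_pow_hammingDist {R : Type*} [CommSemiring R] (s : ι → Bool) (x : R) :
    ∑ y : ι → Bool, x ^ hammingDist s y = (1 + x) ^ Fintype.card ι := by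
  have hterm (y : ι → Bool) : x ^ hammingDist s y = ∏ i, if s i ≠ y i then x else 1 := by
    rw [prod_ite, prod_const_one, mul_one, prod_const, hammingDist]
  have hfactor (i : ι) : ∑ b : Bool, (if s i ≠ b then x else 1) = 1 + x := by
    rw [Fintype.sum_bool]
    cases s i <;> simp [add_comm]
  calc ∑ y : ι → Bool, x ^ hammingDist s y
      = ∑ y : ι → Bool, ∏ i, if s i ≠ y i then x else 1 := sum_congr rfl fun y _ => hterm y
    _ = ∏ i, ∑ b : Bool, if s i ≠ b then x else 1 :=
        (Fintype.prod_sum fun i b => if s i ≠ b then x else 1).symm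
    _ = (1 + x) ^ Fintype.card ι := by simp only [hfactor, prod_const, card_univ]

theorem card_hammingDist_le_le_exp (s : ι → Bool) (r : ℝ) {l : ℝ} (hl : 0 ≤ l) :
    (#{y | (hammingDist s y : ℝ) ≤ r} : ℝ) ≤ exp (l * r) * (1 + exp (-l)) ^ Fintype.card ι := by
  calc (#{y | (hammingDist s y : ℝ) ≤ r} : ℝ)
      = ∑ y : ι → Bool, if (hammingDist s y : ℝ) ≤ r then 1 else 0 := by
        rw [sum_boole]
    _ ≤ ∑ y : ι → Bool, exp (l * (r - hammingDist s y)) := by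
        refine sum_le_sum fun y _ => ?_
        split_ifs with h
        · exact one_le_exp (mul_nonneg hl (sub_nonneg.2 h))
        · positivity
    _ = exp (l * r) * ∑ y : ι → Bool, exp (-l) ^ hammingDist s y := by
        rw [mul_sum]
        refine sum_congr rfl fun y _ => ?_
        rw [← exp_nat_mul, ← exp_add]
        ring_nf
    _ = exp (l * r) * (1 + exp (-l)) ^ Fintype.card ι := by
        rw [sum_pow_hammingDist]

theorem one_add_exp_neg_le (l : ℝ) : 1 + exp (-l) ≤ 2 * exp (-(l / 2) + l ^ 2 / 8) :=
  calc 1 + exp (-l) = 2 * exp (-(l / 2)) * cosh (l / 2) := by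
        rw [cosh_eq]
        field_simp
        rw [mul_add, ← exp_add, ← exp_add]
        simp only [neg_add_cancel, exp_zero, ← two_mul, mul_neg, mul_div_cancel₀ l two_ne_zero]
    _ ≤ 2 * exp (-(l / 2)) * exp ((l / 2) ^ 2 / 2) := by
        gcongr
        exact cosh_le_exp_half_sq _
    _ = 2 * exp (-(l / 2) + l ^ 2 / 8) := by
        rw [mul_assoc, ← exp_add]
        ring_nf

theorem card_hammingDist_le_le (s : ι → Bool) {t : ℝ} (ht : 0 ≤ t) :
    (#{y | (hammingDist s y : ℝ) ≤ Fintype.card ι / 2 - t} : ℝ) ≤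
      2 ^ Fintype.card ι * exp (-2 * t ^ 2 / Fintype.card ι) := by
  set n := Fintype.card ι
  set l := 4 * t / n
  calc (#{y | (hammingDist s y : ℝ) ≤ n / 2 - t} : ℝ)
      ≤ exp (l * (n / 2 - t)) * (1 + exp (-l)) ^ n :=
        card_hammingDist_le_le_exp s _ (by positivity)
    _ ≤ exp (l * (n / 2 - t)) * (2 * exp (-(l / 2) + l ^ 2 / 8)) ^ n := by
        gcongr
        exact one_add_exp_neg_le l
    _ = 2 ^ n * exp (-2 * t ^ 2 / n) := by
        rw [mul_pow, ← exp_nat_mul, mul_left_comm, ← exp_add]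
        congr 2
        rcases eq_or_ne (n : ℝ) 0 with hn | hn
        · simp [l, hn]
        · simp only [l]
          field_simp
          ring

end HammingBall

theorem isProb_unif (n : ℕ) : IsProb (unif n) :=
  ⟨fun _ => by unfold unif; positivity, by simp [unif, card_univ]⟩

section Transport

variable {n : ℕ}

theorem isCoupling_mul {p q : Cube n → ℝ} (hp : IsProb p) (hq : IsProb q) :
    IsCoupling (fun z => p z.1 * q z.2) p q :=
  ⟨fun z => mul_nonneg (hp.1 _) (hq.1 _), fun x => by dsimp only; rw [← mul_sum, hq.2, mul_one],
    fun y => by dsimp only; rw [← sum_mul, hp.2, one_mul]⟩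

theorem mul_sum_le_W {p q : Cube n → ℝ} (hp : IsProb p) (hq : IsProb q) {S : Finset (Cube n)}
    (hS : ∀ x, p x ≠ 0 → x ∈ S) (r : ℝ) :
    r * ∑ y with ∀ s ∈ S, r ≤ hdist s y, q y ≤ W p q := by
  refine le_csInf ⟨_, _, isCoupling_mul hp hq, rfl⟩ ?_
  rintro _ ⟨γ, ⟨hγ, hγp, hγq⟩, rfl⟩
  have hfar (y) (hy : y ∈ ({y | ∀ s ∈ S, r ≤ hdist s y} : Finset (Cube n))) :
      r * q y ≤ ∑ x, γ (x, y) * hdist x y := by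
    rw [← hγq, mul_sum]
    refine sum_le_sum fun x _ => ?_
    rcases (hγ (x, y)).eq_or_lt with h | h
    · simp [← h]
    · have hpx : p x ≠ 0 := by
        rw [← hγp]
        exact (h.trans_le (single_le_sum (fun y' _ => hγ (x, y')) (mem_univ y))).ne'
      rw [mul_comm]
      exact mul_le_mul_of_nonneg_left ((mem_filter.1 hy).2 x (hS x hpx)) h.le
  calc r * ∑ y with ∀ s ∈ S, r ≤ hdist s y, q y
      = ∑ y with ∀ s ∈ S, r ≤ hdist s y, r * q y := by rw [mul_sum]
    _ ≤ ∑ y with ∀ s ∈ S, r ≤ hdist s y, ∑ x, γ (x, y) * hdist x y := sum_le_sum hfar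
    _ ≤ ∑ y, ∑ x, γ (x, y) * hdist x y :=
        sum_le_sum_of_subset_of_nonneg (subset_univ _) fun y _ _ =>
          sum_nonneg fun x _ => mul_nonneg (hγ _) (Nat.cast_nonneg (hammingDist x y))
    _ = ∑ z : Cube n × Cube n, γ z * hdist z.1 z.2 := by
        rw [Fintype.sum_prod_type_right]

theorem two_pow_mul_one_sub_le_card_far {S : Finset (Cube n)} {t : ℝ} (ht : 0 ≤ t) :
    2 ^ n * (1 - #S * exp (-2 * t ^ 2 / n)) ≤ (#{y | ∀ s ∈ S, n / 2 - t ≤ hdist s y} : ℝ) := by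
  set far : Finset (Cube n) := {y | ∀ s ∈ S, n / 2 - t ≤ hdist s y}
  set ball : Cube n → Finset (Cube n) :=
    fun s => {y | (hammingDist s y : ℝ) ≤ Fintype.card (Fin n) / 2 - t}
  have hnear : farᶜ ⊆ S.biUnion ball := by
    intro y hy
    simp only [far, mem_compl, mem_filter, mem_univ, true_and, not_forall, not_le] at hy
    obtain ⟨s, hs, hlt⟩ := hy
    simp only [ball, mem_biUnion, mem_filter, mem_univ, true_and, Fintype.card_fin]
    exact ⟨s, hs, hlt.le⟩
  have hball (s : Cube n) : (#(ball s) : ℝ) ≤ 2 ^ n * exp (-2 * t ^ 2 / n) := by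
    simpa [ball] using card_hammingDist_le_le s ht
  have htotal : (#far : ℝ) + #farᶜ = 2 ^ n := by
    exact_mod_cast (card_add_card_compl far).trans (by simp)
  have hcompl : (#farᶜ : ℝ) ≤ #S * (2 ^ n * exp (-2 * t ^ 2 / n)) :=
    calc (#farᶜ : ℝ) ≤ ∑ s ∈ S, (#(ball s) : ℝ) := by
          exact_mod_cast (card_le_card hnear).trans card_biUnion_le
      _ ≤ ∑ s ∈ S, 2 ^ n * exp (-2 * t ^ 2 / n) := sum_le_sum fun s _ => hball s
      _ = #S * (2 ^ n * exp (-2 * t ^ 2 / n)) := by rw [sum_const, nsmul_eq_mul]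
  linarith

theorem mul_one_sub_le_W_unif {p : Cube n → ℝ} (hp : IsProb p) {S : Finset (Cube n)}
    (hS : ∀ x, p x ≠ 0 → x ∈ S) {t : ℝ} (ht : 0 ≤ t) (htn : t ≤ n / 2) :
    (n / 2 - t) * (1 - #S * exp (-2 * t ^ 2 / n)) ≤ W p (unif n) := by
  have hfrac :
      1 - #S * exp (-2 * t ^ 2 / n) ≤ ∑ y with ∀ s ∈ S, n / 2 - t ≤ hdist s y, unif n y := by
    simp only [unif]
    rw [sum_const, nsmul_eq_mul, mul_one_div, le_div_iff₀ (by positivity), mul_comm]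
    exact two_pow_mul_one_sub_le_card_far ht
  calc (n / 2 - t) * (1 - #S * exp (-2 * t ^ 2 / n))
      ≤ (n / 2 - t) * ∑ y with ∀ s ∈ S, n / 2 - t ≤ hdist s y, unif n y := by
        gcongr
    _ ≤ W p (unif n) := mul_sum_le_W hp (isProb_unif n) hS _

end Transport

theorem isProb_empirical {n N : ℕ} [NeZero N] (X : Fin N → Cube n) : IsProb (empirical X) := by
  refine ⟨fun x => by unfold empirical; positivity, ?_⟩
  simp only [empirical, ← sum_div]
  rw [div_eq_one_iff_eq (NeZero.ne _), ← Nat.cast_sum,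
    ← card_eq_sum_card_fiberwise fun i _ => mem_univ (X i)]
  simp

theorem mem_image_of_empirical_ne_zero {n N : ℕ} {X : Fin N → Cube n} {x : Cube n}
    (hx : empirical X x ≠ 0) : x ∈ univ.image X := by
  have hcard : #{i | X i = x} ≠ 0 := fun h =>
    hx (by simp only [empirical, h, Nat.cast_zero, zero_div])
  obtain ⟨i, hi⟩ := card_ne_zero.1 hcard
  exact mem_image.2 ⟨i, mem_univ _, (mem_filter.1 hi).2⟩

theorem sub_le_W_empirical_unif {α t : ℝ} (hα : 0 ≤ α) {n : ℕ}
    (ht : t ^ 2 = (α + 1) / 2 * n * log n) (ht2 : 2 ≤ t) (htn : 8 * t ≤ log 2 * n)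
    (X : Fin ⌈(n : ℝ) ^ α⌉₊ → Cube n) :
    n / 2 - t ≤ W (empirical X) (unif n) := by
  have hn : 0 < n := Nat.pos_of_ne_zero fun h => by
    simp only [h, CharP.cast_eq_zero, mul_zero, zero_mul] at ht
    nlinarith
  have hn' : (0 : ℝ) < n := Nat.cast_pos.2 hn
  have hpow : 1 ≤ (n : ℝ) ^ α := one_le_rpow (Nat.one_le_cast.2 hn) hα
  have : NeZero ⌈(n : ℝ) ^ α⌉₊ := ⟨(Nat.ceil_pos.2 (by linarith)).ne'⟩
  have hS : (#(univ.image X) : ℝ) ≤ 2 * n ^ α :=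
    calc (#(univ.image X) : ℝ) ≤ ⌈(n : ℝ) ^ α⌉₊ := by
          exact_mod_cast card_image_le.trans_eq (card_fin _)
      _ ≤ 2 * n ^ α := by linarith [Nat.ceil_lt_add_one (zero_le_one.trans hpow)]
  -- shrinking the radius by 2 costs at most the factor `exp (8 t / n) ≤ 2`
  have hexp : exp (-2 * (t - 2) ^ 2 / n) ≤ 2 * n ^ (-(α + 1)) :=
    calc exp (-2 * (t - 2) ^ 2 / n) ≤ exp (log 2 + -(α + 1) * log n) := by
          gcongr
          rw [div_le_iff₀ hn']
          nlinarith
      _ = 2 * n ^ (-(α + 1)) := by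
          rw [exp_add, exp_log two_pos, rpow_def_of_pos hn', mul_comm (log _)]
  have hsmall : #(univ.image X) * exp (-2 * (t - 2) ^ 2 / n) ≤ 4 / n :=
    calc #(univ.image X) * exp (-2 * (t - 2) ^ 2 / n) ≤ 2 * n ^ α * (2 * n ^ (-(α + 1))) := by
          gcongr
      _ = 4 / n := by
          rw [mul_mul_mul_comm, ← rpow_add hn', show α + -(α + 1) = -1 by ring, rpow_neg_one]
          ring
  have hlog2 := log_two_lt_d9
  have hW := mul_one_sub_le_W_unif (isProb_empirical X)
    (fun _ => mem_image_of_empirical_ne_zero) (by linarith : 0 ≤ t - 2)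
    (by nlinarith : t - 2 ≤ n / 2)
  have hloss : (n / 2 - (t - 2)) * (#(univ.image X) * exp (-2 * (t - 2) ^ 2 / n)) ≤ 2 :=
    calc _ ≤ (n : ℝ) / 2 * (4 / n) := by gcongr; linarith
      _ = 2 := by field_simp; norm_num
  linarith

theorem eventually_sqrt_mul_log_le {c : ℝ} (hc : 0 ≤ c) {ε : ℝ} (hε : 0 < ε) :
    ∀ᶠ n : ℕ in atTop, √(c * n * log n) ≤ ε * n := by
  have hlog : ∀ᶠ x : ℝ in atTop, log x ≤ ε ^ 2 / (c + 1) * x := by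
    filter_upwards [isLittleO_log_id_atTop.bound (by positivity : 0 < ε ^ 2 / (c + 1)),
      eventually_ge_atTop 1] with x hx hx1
    simpa [abs_of_nonneg (log_nonneg hx1), abs_of_nonneg (zero_le_one.trans hx1)] using hx
  filter_upwards [tendsto_natCast_atTop_atTop.eventually hlog, eventually_ge_atTop 1] with n hn hn1
  have hn0 : (0 : ℝ) ≤ log n := log_nonneg (Nat.one_le_cast.2 hn1)
  rw [sqrt_le_iff]
  refine ⟨by positivity, ?_⟩
  calc c * n * log n ≤ (c + 1) * n * (ε ^ 2 / (c + 1) * n) := by gcongr; linarith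
    _ = (ε * n) ^ 2 := by field_simp

theorem expected_wasserstein_lower_poly (α : ℝ) (hα : 2 ≤ α) :
    ∃ n₀ : ℕ, ∀ n, n₀ ≤ n →
      ∀ (Ω : Type) [MeasurableSpace Ω] (P : Measure Ω) [IsProbabilityMeasure P]
        (N : ℕ) (X : Fin N → Ω → Cube n),
        N = ⌈(n : ℝ) ^ α⌉₊ → IIDUniform P X →
        (n : ℝ) / 2 - Real.sqrt ((α + 1) / 2 * n * Real.log n) ≤
          ∫ ω, W (empirical fun i => X i ω) (unif n) ∂P := by
  have hlarge : Tendsto (fun n : ℕ => √((α + 1) / 2 * n * log n)) atTop atTop :=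
    tendsto_sqrt_atTop.comp
      ((tendsto_natCast_atTop_atTop.const_mul_atTop (by linarith)).atTop_mul_atTop₀
        (tendsto_log_atTop.comp tendsto_natCast_atTop_atTop))
  obtain ⟨n₀, hn₀⟩ := eventually_atTop.1 ((hlarge.eventually_ge_atTop 2).and
    (eventually_sqrt_mul_log_le (c := (α + 1) / 2) (by linarith) (ε := log 2 / 8) (by positivity)))
  refine ⟨n₀, fun n hn Ω _ P _ N X hN hX => ?_⟩
  subst hN
  obtain ⟨ht2, htn⟩ := hn₀ n hn
  have hW (ω : Ω) := sub_le_W_empirical_unif (by linarith) (sq_sqrt (by positivity)) ht2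
    (by linarith) fun i => X i ω
  have hint : Integrable (fun ω => W (empirical fun i => X i ω) (unif n)) P :=
    (Integrable.of_finite (f := fun x => W (empirical x) (unif n))).comp_measurable
      (measurable_pi_lambda (fun ω i => X i ω) hX.1)
  calc (n : ℝ) / 2 - √((α + 1) / 2 * n * log n)
      = ∫ _, (n : ℝ) / 2 - √((α + 1) / 2 * n * log n) ∂P := by simp
    _ ≤ _ := integral_mono (integrable_const _) hint hW
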